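/- arXiv:2206.04219 — 4 statements merged into one kernel-verified Lean document; each statement's English description precedes it below -/
import Mathlib

section
/- The filling operation is invariant under solitaire moves: if a finite pattern Q is obtained from a finite pattern P ⊂ ℤ² by a single triangle solitaire move, then φ(P) = φ(Q), where φ denotes the fill closure. -/
open Set Relation

/-- Points of the plane lattice. -/
abbrev Pt : Type := ℤ × ℤ

/-- The triangle shape `T = {(0,1),(1,1),(1,0)}`. -/
def Tshape : Set Pt := {(0, 1), (1, 1), (1, 0)}

/-- Translate of a set of points by a vector. -/
def transl (v : Pt) (S : Set Pt) : Set Pt := (fun p => v + p) '' S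

/-- Translate of a finite set of points by a vector. -/
def transF (v : Pt) (S : Finset Pt) : Finset Pt := S.image (fun p => v + p)

/-- A set is filled if every translate of `T` containing at least two of its
points is contained in it. -/
def Filled (F : Set Pt) : Prop :=
  ∀ v : Pt, 2 ≤ (F ∩ transl v Tshape).ncard → transl v Tshape ⊆ F

/-- The fill closure `φ(P)`: smallest filled superset of `P`. -/
def fill (P : Set Pt) : Set Pt := ⋂₀ {F | P ⊆ F ∧ Filled F}

/-- A single triangle solitaire move: if a translate `v + T` contains exactly two
points of `P`, replace one of them by the third point of `v + T`. -/
def Move (P Q : Finset Pt) : Prop :=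
  ∃ v x y : Pt, x ∈ Tshape ∧ y ∈ Tshape ∧ x ≠ y ∧
    v + x ∈ P ∧ v + y ∉ P ∧
    ((P : Set Pt) ∩ transl v Tshape).ncard = 2 ∧
    (Q : Set Pt) = insert (v + y) ((P : Set Pt) \ {v + x})

/-- `Q` is in the solitaire orbit of `P`. -/
def InOrbit (P Q : Finset Pt) : Prop := Relation.ReflTransGen Move P Q

/-- The discrete triangle `T_n = {(a,b) ∈ {0,…,n−1}² : a + b ≥ n − 1}`. -/
def triangle (n : ℕ) : Set Pt :=
  {p | 0 ≤ p.1 ∧ p.1 < (n : ℤ) ∧ 0 ≤ p.2 ∧ p.2 < (n : ℤ) ∧ (n : ℤ) - 1 ≤ p.1 + p.2}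

/-- Neighbourhood of a point: the other points sharing a translate of `T` with it. -/
def nbr (x : Pt) : Set Pt :=
  {y | y ≠ x ∧ ∃ v : Pt, x ∈ transl v Tshape ∧ y ∈ transl v Tshape}

/-- Neighbourhood of a set. -/
def nbrSet (A : Set Pt) : Set Pt := ⋃ a ∈ A, nbr a

/-- Two sets touch if one meets the neighbourhood of the other. -/
def Touch (A B : Set Pt) : Prop := (A ∩ nbrSet B).Nonempty ∨ (B ∩ nbrSet A).Nonempty

/-- `(r, k, v)` is a decomposition of `φ(P)` into pairwise non-touching
translated triangles `vᵢ + T_{kᵢ}`. -/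
def IsDecomp (P : Finset Pt) (r : ℕ) (k : Fin r → ℕ) (v : Fin r → Pt) : Prop :=
  (fill (P : Set Pt) = ⋃ i, transl (v i) (triangle (k i))) ∧
  (∀ i, 1 ≤ k i) ∧
  (∀ i j, i ≠ j → ¬ Touch (transl (v i) (triangle (k i))) (transl (v j) (triangle (k j))))

/-- The horizontal line `L_n = {(a, n−1) : 0 ≤ a ≤ n−1}` (top edge of `T_n`). -/
def lineF (n : ℕ) : Finset Pt :=
  (Finset.range n).image (fun a : ℕ => (((a : ℤ), (n : ℤ) - 1) : Pt))

/-- The vertical edge `{(n−1, b) : 0 ≤ b ≤ n−1}` of `T_n`. -/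
def vlineF (n : ℕ) : Finset Pt :=
  (Finset.range n).image (fun b : ℕ => ((((n : ℤ) - 1), (b : ℤ)) : Pt))

/-- The diagonal edge `{(a, n−1−a) : 0 ≤ a ≤ n−1}` of `T_n`. -/
def dlineF (n : ℕ) : Finset Pt :=
  (Finset.range n).image (fun a : ℕ => (((a : ℤ), (n : ℤ) - 1 - (a : ℤ)) : Pt))

/-- The points of `T_n` below the top line, listed row `n−2` down to row `0`,
each row from right to left. -/
def belowPts (n : ℕ) : List Pt :=
  (List.range (n - 1)).flatMap (fun i =>
    (List.range (n - 1 - i)).map (fun t =>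
      (((n : ℤ) - 1 - (t : ℤ), (n : ℤ) - 2 - (i : ℤ)) : Pt)))

/-- The canonical pattern `P_{n,k}`: the line `L_n` together with the first `k`
points of `T_n \ L_n` in the order: row `n−2` right to left, then row `n−3`, etc. -/
def PnkF (n k : ℕ) : Finset Pt := lineF n ∪ ((belowPts n).take k).toFinset

/-- A TEP family on the triangle shape, with cells ordered `(0,1), (1,1), (1,0)`:
any two of the three symbols determine the third uniquely. -/
def IsTEP {A : Type} (R : Set (A × A × A)) : Prop :=
  (∀ a b : A, ∃! c : A, (a, b, c) ∈ R) ∧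
  (∀ a c : A, ∃! b : A, (a, b, c) ∈ R) ∧
  (∀ b c : A, ∃! a : A, (a, b, c) ∈ R)

/-- A colouring is valid on `T_n` if every translate of `T` inside `T_n`
carries a pattern of `R`. -/
def ValidOn {A : Type} (R : Set (A × A × A)) (n : ℕ) (x : Pt → A) : Prop :=
  ∀ v : Pt, transl v Tshape ⊆ triangle n →
    (x (v + (0, 1)), x (v + (1, 1)), x (v + (1, 0))) ∈ R

/-- One completion step: a translate of `T` inside `T_n` has exactly two
coloured cells; colour the third using the TEP rule `R`. States are pairs
(set of coloured cells, colouring). -/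
def TStep {A : Type} (R : Set (A × A × A)) (n : ℕ)
    (s t : Set Pt × (Pt → A)) : Prop :=
  ∃ v : Pt, transl v Tshape ⊆ triangle n ∧
    ∃ c ∈ transl v Tshape, c ∉ s.1 ∧ transl v Tshape \ {c} ⊆ s.1 ∧
      t.1 = insert c s.1 ∧ (∀ p : Pt, p ≠ c → t.2 p = s.2 p) ∧
      (t.2 (v + (0, 1)), t.2 (v + (1, 1)), t.2 (v + (1, 0))) ∈ R

/-- `P ⊆ T_n` is a basis: for every colouring of `P`, every maximal run of the
iterative completion process covers `T_n` and produces a valid pattern. -/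
def IsBasis {A : Type} (R : Set (A × A × A)) (n : ℕ) (P : Finset Pt) : Prop :=
  (P : Set Pt) ⊆ triangle n ∧
  ∀ q : Pt → A, ∀ s : Set Pt × (Pt → A),
    Relation.ReflTransGen (TStep R n) ((P : Set Pt), q) s →
    (∀ t, ¬ TStep R n s t) →
    triangle n ⊆ s.1 ∧ ValidOn R n s.2

lemma tshape_finite : Tshape.Finite := by
  unfold Tshape
  exact ((Set.finite_singleton _).insert _).insert _

lemma transl_finite (v : Pt) : (transl v Tshape).Finite :=
  tshape_finite.image _

lemma subset_fill (P : Set Pt) : P ⊆ fill P := by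
  intro p hp F hF
  exact hF.1 hp

lemma fill_filled (P : Set Pt) : Filled (fill P) := by
  intro v hv p hp F hF
  have h1 : fill P ∩ transl v Tshape ⊆ F ∩ transl v Tshape := by
    intro q hq
    exact ⟨hq.1 F hF, hq.2⟩
  have h2 : 2 ≤ (F ∩ transl v Tshape).ncard :=
    le_trans hv (Set.ncard_le_ncard h1 ((transl_finite v).subset Set.inter_subset_right))
  exact hF.2 v h2 hp

lemma fill_min {P F : Set Pt} (hPF : P ⊆ F) (hF : Filled F) : fill P ⊆ F := by
  intro p hp
  exact hp F ⟨hPF, hF⟩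

/-- the fill closure is invariant under a single solitaire move. -/
theorem fill_invariant_of_move (P Q : Finset Pt) (h : Move P Q) :
    fill (P : Set Pt) = fill (Q : Set Pt) := by
  obtain ⟨v, x, y, hx, hy, hxy, hxP, hyP, hcard, hQ⟩ := h
  have hxT : v + x ∈ transl v Tshape := ⟨x, hx, rfl⟩
  have hyT : v + y ∈ transl v Tshape := ⟨y, hy, rfl⟩
  -- the second point of P ∩ vT, distinct from v+x
  have hxmem : v + x ∈ (P : Set Pt) ∩ transl v Tshape := ⟨hxP, hxT⟩
  obtain ⟨w, hw, hwx⟩ : ∃ w ∈ (P : Set Pt) ∩ transl v Tshape, w ≠ v + x := by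
    have : 1 < ((P : Set Pt) ∩ transl v Tshape).ncard := by omega
    exact Set.exists_ne_of_one_lt_ncard this _
  -- vT ⊆ fill P
  have hTfillP : transl v Tshape ⊆ fill (P : Set Pt) := by
    apply fill_filled (P : Set Pt) v
    rw [← hcard]
    refine Set.ncard_le_ncard ?_ ((transl_finite v).subset Set.inter_subset_right)
    exact Set.inter_subset_inter_left _ (subset_fill _)
  -- vT ⊆ fill Q
  have hwQ : w ∈ (Q : Set Pt) := by
    rw [hQ]; exact Or.inr ⟨hw.1, hwx⟩
  have hyQ : v + y ∈ (Q : Set Pt) := by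
    rw [hQ]; exact Or.inl rfl
  have hwy : w ≠ v + y := fun e => hyP (e ▸ hw.1)
  have hTfillQ : transl v Tshape ⊆ fill (Q : Set Pt) := by
    apply fill_filled (Q : Set Pt) v
    have hsub : {w, v + y} ⊆ fill (Q : Set Pt) ∩ transl v Tshape := by
      intro p hp
      rcases hp with rfl | rfl
      · exact ⟨subset_fill _ hwQ, hw.2⟩
      · exact ⟨subset_fill _ hyQ, hyT⟩
    calc 2 = ({w, v + y} : Set Pt).ncard := by
              rw [Set.ncard_pair hwy]
      _ ≤ _ := Set.ncard_le_ncard hsub ((transl_finite v).subset Set.inter_subset_right)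
  -- conclude
  apply Set.Subset.antisymm
  · apply fill_min ?_ (fill_filled _)
    intro p hp
    by_cases hpx : p = v + x
    · exact hpx ▸ hTfillQ hxT
    · exact subset_fill _ (by rw [hQ]; exact Or.inr ⟨hp, hpx⟩)
  · apply fill_min ?_ (fill_filled _)
    intro p hp
    rw [hQ] at hp
    rcases hp with rfl | hp
    · exact hTfillP hyT
    · exact subset_fill _ hp.1
end

section
/- For every n ≥ 1, the three edges of the discrete triangle T_n are in the same solitaire orbit: the horizontal edge {(a, n−1) : 0 ≤ a ≤ n−1}, the vertical edge {(n−1, b) : 0 ≤ b ≤ n−1}, and the diagonal edge {(a, b) ∈ {0,…,n−1}² : a+b = n−1} can be transformed into one another by finite sequences of triangle solitaire moves. -/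
open Set Relation

/-!
Moves are reversible, and the reflection `(a, b) ↦ (b, a)` maps translates of `T` to
translates of `T`, so it maps orbits to orbits; it swaps the horizontal and vertical edges and
fixes the diagonal. It therefore suffices to move the horizontal edge onto the diagonal.

Both are graphs of functions on the columns `0, …, n - 1`. In such a pattern the point of column
`c` may drop by one when the point of column `c - 1` is at the same height: these two points
and the cell below the point of column `c` span a translate of `T`. Dropping the columns right
of `i`, from right to left, turns the staircase `x ↦ n - 1 - min x i` into
`x ↦ n - 1 - min x (i + 1)`, and these staircases lead from the horizontal edge (`i = 0`)
to the diagonal (`i = n - 1`).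
-/

lemma mem_transl_Tshape {v p : Pt} :
    p ∈ transl v Tshape ↔
      p = (v.1, v.2 + 1) ∨ p = (v.1 + 1, v.2 + 1) ∨ p = (v.1 + 1, v.2) := by
  simp only [transl, Tshape, Set.image_insert_eq, Set.image_singleton, Set.mem_insert_iff,
    Set.mem_singleton_iff, Prod.ext_iff, Prod.fst_add, Prod.snd_add]
  omega

lemma Move.symm {P Q : Finset Pt} (h : Move P Q) : Move Q P := by
  obtain ⟨v, x, y, hx, hy, hxy, hxP, hyP, hcard, hQ⟩ := h
  have hne : v + x ≠ v + y := by simpa using hxy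
  have hyT : v + y ∈ transl v Tshape := ⟨y, hy, rfl⟩
  have hxPT : v + x ∈ (P : Set Pt) ∩ transl v Tshape := ⟨hxP, x, hx, rfl⟩
  refine ⟨v, y, x, hy, hx, hxy.symm, ?_, ?_, ?_, ?_⟩
  · rw [← Finset.mem_coe, hQ]
    exact Set.mem_insert _ _
  · rw [← Finset.mem_coe, hQ]
    simp [hne]
  · have hQT : (Q : Set Pt) ∩ transl v Tshape =
        insert (v + y) (((P : Set Pt) ∩ transl v Tshape) \ {v + x}) := by
      rw [hQ, Set.insert_inter_of_mem hyT, Set.inter_sdiff_right_comm]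
    rw [hQT, Set.ncard_insert_of_notMem (by simp [hyP]) ((P.finite_toSet.inter_of_left _).sdiff),
      Set.ncard_sdiff_singleton_of_mem hxPT, hcard]
  · rw [hQ, Set.insert_sdiff_of_mem _ (Set.mem_singleton _),
      Set.sdiff_singleton_eq_self (by simp [hyP]), Set.insert_sdiff_singleton,
      Set.insert_eq_of_mem (by simpa using hxP)]

lemma InOrbit.symm {P Q : Finset Pt} (h : InOrbit P Q) : InOrbit Q P :=
  ReflTransGen.mono (fun _ _ hm => hm.symm) _ _ (reflTransGen_swap.mpr h)

lemma Move.image_addEquiv (e : Pt ≃+ Pt) (he : e '' Tshape = Tshape) {P Q : Finset Pt}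
    (h : Move P Q) : Move (P.image e) (Q.image e) := by
  obtain ⟨v, x, y, hx, hy, hxy, hxP, hyP, hcard, hQ⟩ := h
  have htransl : transl (e v) Tshape = e '' transl v Tshape := by
    rw [transl, transl, Set.image_image]
    nth_rewrite 1 [← he]
    simp only [Set.image_image, map_add]
  refine ⟨e v, e x, e y, he ▸ Set.mem_image_of_mem e hx, he ▸ Set.mem_image_of_mem e hy,
    e.injective.ne hxy, ?_, ?_, ?_, ?_⟩
  · rw [← map_add]
    exact Finset.mem_image_of_mem e hxP
  · rw [← map_add, e.injective.mem_finset_image]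
    exact hyP
  · rw [Finset.coe_image, htransl, ← Set.image_inter e.injective,
      Set.ncard_image_of_injective _ e.injective, hcard]
  · rw [Finset.coe_image, Finset.coe_image, hQ, Set.image_insert_eq, Set.image_sdiff e.injective,
      Set.image_singleton, map_add, map_add]

lemma InOrbit.image_addEquiv (e : Pt ≃+ Pt) (he : e '' Tshape = Tshape) {P Q : Finset Pt}
    (h : InOrbit P Q) : InOrbit (P.image e) (Q.image e) :=
  ReflTransGen.lift _ (fun _ _ hm => hm.image_addEquiv e he) _ _ h

lemma image_prodComm_Tshape : AddEquiv.prodComm '' Tshape = Tshape := by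
  ext p
  simp only [Tshape, Set.image_insert_eq, Set.image_singleton, AddEquiv.coe_prodComm,
    Prod.swap_prod_mk, Set.mem_insert_iff, Set.mem_singleton_iff]
  tauto

def graphPattern (n : ℕ) (f : ℤ → ℤ) : Finset Pt :=
  (Finset.range n).image fun a : ℕ => ((a : ℤ), f a)

lemma mem_graphPattern {n : ℕ} {f : ℤ → ℤ} {p : Pt} :
    p ∈ graphPattern n f ↔ 0 ≤ p.1 ∧ p.1 < n ∧ p.2 = f p.1 := by
  simp only [graphPattern, Finset.mem_image, Finset.mem_range]
  constructor
  · rintro ⟨a, ha, rfl⟩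
    exact ⟨by positivity, by simpa using ha, rfl⟩
  · rintro ⟨h0, hn, h⟩
    exact ⟨p.1.toNat, by omega, Prod.ext (by simp [h0]) (by simp [h0, h])⟩

lemma graphPattern_congr {n : ℕ} {f g : ℤ → ℤ}
    (h : ∀ x : ℤ, 0 ≤ x → x < n → f x = g x) :
    graphPattern n f = graphPattern n g := by
  ext p
  simp only [mem_graphPattern]
  constructor <;> rintro ⟨h0, hn, hp⟩ <;> simp [h0, hn, hp, h _ h0 hn]

lemma lineF_eq_graphPattern (n : ℕ) : lineF n = graphPattern n fun _ => n - 1 := rfl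

lemma dlineF_eq_graphPattern (n : ℕ) : dlineF n = graphPattern n fun x => n - 1 - x := rfl

lemma move_graphPattern {n : ℕ} {f g : ℤ → ℤ} {c : ℤ} (hc : 0 < c) (hcn : c < n)
    (hflat : f (c - 1) = f c) (hgc : g c = f c - 1) (hg : ∀ x ≠ c, g x = f x) :
    Move (graphPattern n f) (graphPattern n g) := by
  refine ⟨(c - 1, f c - 1), (1, 1), (1, 0), by simp [Tshape], by simp [Tshape], by decide,
    ?_, ?_, ?_, ?_⟩
  · simp [mem_graphPattern, hc.le, hcn]
  · simp [mem_graphPattern]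
  · have : (graphPattern n f : Set Pt) ∩ transl (c - 1, f c - 1) Tshape =
        {(c - 1, f c), (c, f c)} := by
      ext ⟨x, y⟩
      simp only [Set.mem_inter_iff, Finset.mem_coe, mem_graphPattern, mem_transl_Tshape,
        Set.mem_insert_iff, Set.mem_singleton_iff, Prod.mk.injEq]
      grind
    rw [this, Set.ncard_pair (by simp)]
  · ext ⟨x, y⟩
    simp only [Finset.mem_coe, mem_graphPattern, Set.mem_insert_iff, Set.mem_sdiff,
      Set.mem_singleton_iff, Prod.mk.injEq, Prod.mk_add_mk]
    grind

lemma inOrbit_graphPattern_lower {n : ℕ} {f : ℤ → ℤ} {i : ℤ} (hi : 0 ≤ i) (hin : i < n)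
    (hflat : ∀ x, i ≤ x → x < n → f x = f i) :
    InOrbit (graphPattern n f) (graphPattern n fun x => if i < x then f x - 1 else f x) := by
  induction i, (by omega : i ≤ n - 1) using Int.leInductionDown with
  | base =>
    rw [graphPattern_congr (g := f) fun x _ hx => if_neg (by omega)]
    exact .refl
  | pred j _ ih =>
    have hflat' : ∀ x, j ≤ x → x < n → f x = f j := fun x hx hxn =>
      (hflat x (by omega) hxn).trans (hflat j (by omega) (by omega)).symm
    refine (ih (by omega) (by omega) hflat').tail (move_graphPattern (c := j) (by omega) (by omega)
      ?_ ?_ ?_)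
    · simp [hflat j (by omega) (by omega)]
    · simp
    · intro x hx
      split_ifs <;> omega

lemma inOrbit_lineF_dlineF {n : ℕ} (hn : 1 ≤ n) : InOrbit (lineF n) (dlineF n) := by
  let staircase (i x : ℤ) : ℤ := n - 1 - min x i
  have hline : lineF n = graphPattern n (staircase 0) := by
    rw [lineF_eq_graphPattern]
    exact graphPattern_congr fun x hx _ => by simp only [staircase]; omega
  have hdiag : dlineF n = graphPattern n (staircase (n - 1)) := by
    rw [dlineF_eq_graphPattern]
    exact graphPattern_congr fun x _ hx => by simp only [staircase]; omega
  have hstep (i : ℤ) (hi : 0 ≤ i) (hin : i < n - 1) :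
      InOrbit (graphPattern n (staircase i)) (graphPattern n (staircase (i + 1))) := by
    convert inOrbit_graphPattern_lower (n := n) hi (by omega) fun x hx _ => ?_ using 2
    · funext x
      simp only [staircase]
      split_ifs <;> omega
    · simp only [staircase]
      omega
  have hchain (i : ℤ) (hi : 0 ≤ i) :
      i ≤ n - 1 → InOrbit (graphPattern n (staircase 0)) (graphPattern n (staircase i)) := by
    induction i, hi using Int.leInduction with
    | base => exact fun _ => .refl
    | succ i hi ih => exact fun hin => (ih (by omega)).trans (hstep i hi (by omega))
  rw [hline, hdiag]
  exact hchain _ (by omega) le_rfl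

lemma image_prodComm_lineF (n : ℕ) : (lineF n).image AddEquiv.prodComm = vlineF n := by
  rw [lineF, Finset.image_image]
  rfl

lemma image_prodComm_dlineF (n : ℕ) : (dlineF n).image AddEquiv.prodComm = dlineF n := by
  ext ⟨x, y⟩
  simp only [dlineF_eq_graphPattern, Finset.mem_image, mem_graphPattern, Prod.exists,
    AddEquiv.coe_prodComm, Prod.swap_prod_mk, Prod.mk.injEq, existsAndEq, and_true,
    exists_eq_right_right]
  omega

/-- the three edges of `T_n` are in the same solitaire orbit. -/
theorem edges_same_orbit (n : ℕ) (hn : 1 ≤ n) :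
    InOrbit (lineF n) (vlineF n) ∧ InOrbit (lineF n) (dlineF n) ∧
      InOrbit (vlineF n) (dlineF n) := by
  have hline_dline := inOrbit_lineF_dlineF hn
  have hvline_dline : InOrbit (vlineF n) (dlineF n) := by
    simpa only [image_prodComm_lineF, image_prodComm_dlineF] using
      hline_dline.image_addEquiv _ image_prodComm_Tshape
  exact ⟨hline_dline.trans hvline_dline.symm, hline_dline, hvline_dline⟩
end

section
/- There exists a finite pattern P ⊂ ℤ² with excess e(P) = 1 whose only excess set is the empty set; in particular, the maximum cardinality of an excess set of P can be strictly smaller than e(P). -/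
open Set Relation

-- basics
lemma transl_tshape (v : Pt) :
    transl v Tshape = {v + (0, 1), v + (1, 1), v + (1, 0)} := by
  simp [transl, Tshape, Set.image_insert_eq]

lemma mem_transl1 (v : Pt) : v + (0,1) ∈ transl v Tshape := by
  rw [transl_tshape]; simp
lemma mem_transl2 (v : Pt) : v + (1,1) ∈ transl v Tshape := by
  rw [transl_tshape]; simp
lemma mem_transl3 (v : Pt) : v + (1,0) ∈ transl v Tshape := by
  rw [transl_tshape]; simp

lemma pair_of_ncard {F : Set Pt} {v : Pt}
    (h : 2 ≤ (F ∩ transl v Tshape).ncard) :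
    (v + (0,1) ∈ F ∧ v + (1,1) ∈ F) ∨ (v + (0,1) ∈ F ∧ v + (1,0) ∈ F) ∨
    (v + (1,1) ∈ F ∧ v + (1,0) ∈ F) := by
  by_contra hc
  push_neg at hc
  obtain ⟨h1, h2, h3⟩ := hc
  have hfin : (F ∩ transl v Tshape).Finite := (transl_finite v).inter_of_right F
  have hsub : ∃ x : Pt, F ∩ transl v Tshape ⊆ {x} := by
    by_cases ha : v + (0,1) ∈ F
    · refine ⟨v + (0,1), fun p hp => ?_⟩
      rw [transl_tshape] at hp
      rcases hp.2 with rfl | rfl | rfl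
      · rfl
      · exact absurd hp.1 (h1 ha)
      · exact absurd hp.1 (h2 ha)
    · by_cases hb : v + (1,1) ∈ F
      · refine ⟨v + (1,1), fun p hp => ?_⟩
        rw [transl_tshape] at hp
        rcases hp.2 with rfl | rfl | rfl
        · exact absurd hp.1 ha
        · rfl
        · exact absurd hp.1 (h3 hb)
      · refine ⟨v + (1,0), fun p hp => ?_⟩
        rw [transl_tshape] at hp
        rcases hp.2 with rfl | rfl | rfl
        · exact absurd hp.1 ha
        · exact absurd hp.1 hb
        · rfl
  obtain ⟨x, hx⟩ := hsub
  have := Set.ncard_le_ncard hx (Set.finite_singleton x)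
  simp [Set.ncard_singleton] at this
  omega

lemma ncard_ge_two {F : Set Pt} {v : Pt} {p q : Pt} (hp : p ∈ F) (hq : q ∈ F)
    (hp' : p ∈ transl v Tshape) (hq' : q ∈ transl v Tshape) (hne : p ≠ q) :
    2 ≤ (F ∩ transl v Tshape).ncard := by
  have hfin : (F ∩ transl v Tshape).Finite := (transl_finite v).inter_of_right F
  have := (Set.one_lt_ncard hfin).2 ⟨p, ⟨hp, hp'⟩, q, ⟨hq, hq'⟩, hne⟩
  omega

lemma add_ne_add (v : Pt) {a b : Pt} (h : a ≠ b) : v + a ≠ v + b := by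
  intro hc; exact h (by simpa using hc)

lemma force3 {F : Set Pt} (hF : Filled F) (v : Pt)
    (h1 : v + (0,1) ∈ F) (h2 : v + (1,1) ∈ F) : v + (1,0) ∈ F :=
  hF v (ncard_ge_two h1 h2 (mem_transl1 v) (mem_transl2 v)
    (add_ne_add v (by decide))) (mem_transl3 v)
lemma force2 {F : Set Pt} (hF : Filled F) (v : Pt)
    (h1 : v + (0,1) ∈ F) (h3 : v + (1,0) ∈ F) : v + (1,1) ∈ F :=
  hF v (ncard_ge_two h1 h3 (mem_transl1 v) (mem_transl3 v)
    (add_ne_add v (by decide))) (mem_transl2 v)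
lemma force1 {F : Set Pt} (hF : Filled F) (v : Pt)
    (h2 : v + (1,1) ∈ F) (h3 : v + (1,0) ∈ F) : v + (0,1) ∈ F :=
  hF v (ncard_ge_two h2 h3 (mem_transl2 v) (mem_transl3 v)
    (add_ne_add v (by decide))) (mem_transl1 v)

lemma filled_triangle (n : ℕ) : Filled (triangle n) := by
  intro v hv
  obtain ⟨a, b⟩ := v
  have hpair := pair_of_ncard hv
  rw [transl_tshape]
  intro p hp
  simp only [Prod.mk_add_mk] at hpair hp
  simp only [triangle, Set.mem_setOf_eq] at hpair ⊢
  rcases hp with rfl | rfl | rfl <;>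
    · simp only [Prod.mk_add_mk]
      omega

lemma fill_subset {P F : Set Pt} (h1 : P ⊆ F) (h2 : Filled F) : fill P ⊆ F :=
  Set.sInter_subset_of_mem ⟨h1, h2⟩

def Good (S : Finset Pt) (v : Pt) : Prop :=
  ((v + (0,1) ∈ S ∧ v + (1,1) ∈ S) ∨ (v + (0,1) ∈ S ∧ v + (1,0) ∈ S) ∨
    (v + (1,1) ∈ S ∧ v + (1,0) ∈ S)) →
  (v + (0,1) ∈ S ∧ v + (1,1) ∈ S ∧ v + (1,0) ∈ S)

instance (S : Finset Pt) (v : Pt) : Decidable (Good S v) := by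
  unfold Good; infer_instance

lemma filled_finset (S : Finset Pt)
    (h : ∀ p ∈ S, ∀ t ∈ ([(0,1),(1,1),(1,0)] : List Pt), Good S (p - t)) :
    Filled (↑S : Set Pt) := by
  intro v hv
  have hpair := pair_of_ncard hv
  have hgood : Good S v := by
    have key : ∀ t ∈ ([(0,1),(1,1),(1,0)] : List Pt), v + t ∈ S → Good S v := by
      intro t ht hm
      have := h (v + t) hm t ht
      simpa using this
    rcases hpair with ⟨h1, _⟩ | ⟨h1, _⟩ | ⟨h1, _⟩
    · exact key (0,1) (by simp) h1
    · exact key (0,1) (by simp) h1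
    · exact key (1,1) (by simp) h1
  have hall := hgood (by simpa using hpair)
  rw [transl_tshape]
  intro p hp
  rcases hp with rfl | rfl | rfl
  · exact hall.1
  · exact hall.2.1
  · exact hall.2.2


def Pex : Finset Pt := {((0:ℤ), (6:ℤ)), ((1:ℤ), (5:ℤ)), ((3:ℤ), (5:ℤ)), ((3:ℤ), (6:ℤ)), ((5:ℤ), (1:ℤ)), ((5:ℤ), (3:ℤ)), ((6:ℤ), (0:ℤ)), ((6:ℤ), (3:ℤ))}

def Fq0 : Finset Pt := {((1:ℤ), (5:ℤ)), ((2:ℤ), (6:ℤ)), ((3:ℤ), (3:ℤ)), ((3:ℤ), (5:ℤ)), ((3:ℤ), (6:ℤ)), ((4:ℤ), (2:ℤ)), ((4:ℤ), (3:ℤ)), ((5:ℤ), (1:ℤ)), ((5:ℤ), (2:ℤ)), ((5:ℤ), (3:ℤ)), ((6:ℤ), (0:ℤ)), ((6:ℤ), (1:ℤ)), ((6:ℤ), (2:ℤ)), ((6:ℤ), (3:ℤ))}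
lemma filledFq0 : Filled (↑Fq0 : Set Pt) := filled_finset _ (by decide)

def Fq1 : Finset Pt := {((0:ℤ), (6:ℤ)), ((2:ℤ), (6:ℤ)), ((3:ℤ), (3:ℤ)), ((3:ℤ), (5:ℤ)), ((3:ℤ), (6:ℤ)), ((4:ℤ), (2:ℤ)), ((4:ℤ), (3:ℤ)), ((5:ℤ), (1:ℤ)), ((5:ℤ), (2:ℤ)), ((5:ℤ), (3:ℤ)), ((6:ℤ), (0:ℤ)), ((6:ℤ), (1:ℤ)), ((6:ℤ), (2:ℤ)), ((6:ℤ), (3:ℤ))}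
lemma filledFq1 : Filled (↑Fq1 : Set Pt) := filled_finset _ (by decide)

def Fq2 : Finset Pt := {((0:ℤ), (6:ℤ)), ((1:ℤ), (5:ℤ)), ((1:ℤ), (6:ℤ)), ((3:ℤ), (3:ℤ)), ((3:ℤ), (6:ℤ)), ((4:ℤ), (2:ℤ)), ((4:ℤ), (3:ℤ)), ((5:ℤ), (1:ℤ)), ((5:ℤ), (2:ℤ)), ((5:ℤ), (3:ℤ)), ((6:ℤ), (0:ℤ)), ((6:ℤ), (1:ℤ)), ((6:ℤ), (2:ℤ)), ((6:ℤ), (3:ℤ))}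
lemma filledFq2 : Filled (↑Fq2 : Set Pt) := filled_finset _ (by decide)

def Fq3 : Finset Pt := {((0:ℤ), (6:ℤ)), ((1:ℤ), (5:ℤ)), ((1:ℤ), (6:ℤ)), ((3:ℤ), (3:ℤ)), ((3:ℤ), (5:ℤ)), ((4:ℤ), (2:ℤ)), ((4:ℤ), (3:ℤ)), ((5:ℤ), (1:ℤ)), ((5:ℤ), (2:ℤ)), ((5:ℤ), (3:ℤ)), ((6:ℤ), (0:ℤ)), ((6:ℤ), (1:ℤ)), ((6:ℤ), (2:ℤ)), ((6:ℤ), (3:ℤ))}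
lemma filledFq3 : Filled (↑Fq3 : Set Pt) := filled_finset _ (by decide)

def Fq4 : Finset Pt := {((0:ℤ), (6:ℤ)), ((1:ℤ), (5:ℤ)), ((1:ℤ), (6:ℤ)), ((2:ℤ), (4:ℤ)), ((2:ℤ), (5:ℤ)), ((2:ℤ), (6:ℤ)), ((3:ℤ), (3:ℤ)), ((3:ℤ), (4:ℤ)), ((3:ℤ), (5:ℤ)), ((3:ℤ), (6:ℤ)), ((5:ℤ), (3:ℤ)), ((6:ℤ), (0:ℤ)), ((6:ℤ), (2:ℤ)), ((6:ℤ), (3:ℤ))}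
lemma filledFq4 : Filled (↑Fq4 : Set Pt) := filled_finset _ (by decide)

def Fq5 : Finset Pt := {((0:ℤ), (6:ℤ)), ((1:ℤ), (5:ℤ)), ((1:ℤ), (6:ℤ)), ((2:ℤ), (4:ℤ)), ((2:ℤ), (5:ℤ)), ((2:ℤ), (6:ℤ)), ((3:ℤ), (3:ℤ)), ((3:ℤ), (4:ℤ)), ((3:ℤ), (5:ℤ)), ((3:ℤ), (6:ℤ)), ((5:ℤ), (1:ℤ)), ((6:ℤ), (0:ℤ)), ((6:ℤ), (1:ℤ)), ((6:ℤ), (3:ℤ))}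
lemma filledFq5 : Filled (↑Fq5 : Set Pt) := filled_finset _ (by decide)

def Fq6 : Finset Pt := {((0:ℤ), (6:ℤ)), ((1:ℤ), (5:ℤ)), ((1:ℤ), (6:ℤ)), ((2:ℤ), (4:ℤ)), ((2:ℤ), (5:ℤ)), ((2:ℤ), (6:ℤ)), ((3:ℤ), (3:ℤ)), ((3:ℤ), (4:ℤ)), ((3:ℤ), (5:ℤ)), ((3:ℤ), (6:ℤ)), ((5:ℤ), (1:ℤ)), ((5:ℤ), (3:ℤ)), ((6:ℤ), (2:ℤ)), ((6:ℤ), (3:ℤ))}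
lemma filledFq6 : Filled (↑Fq6 : Set Pt) := filled_finset _ (by decide)

def Fq7 : Finset Pt := {((0:ℤ), (6:ℤ)), ((1:ℤ), (5:ℤ)), ((1:ℤ), (6:ℤ)), ((2:ℤ), (4:ℤ)), ((2:ℤ), (5:ℤ)), ((2:ℤ), (6:ℤ)), ((3:ℤ), (3:ℤ)), ((3:ℤ), (4:ℤ)), ((3:ℤ), (5:ℤ)), ((3:ℤ), (6:ℤ)), ((5:ℤ), (1:ℤ)), ((5:ℤ), (3:ℤ)), ((6:ℤ), (0:ℤ)), ((6:ℤ), (1:ℤ))}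
lemma filledFq7 : Filled (↑Fq7 : Set Pt) := filled_finset _ (by decide)

lemma triangle7_subset {F : Set Pt} (hF : Filled F) (hPF : ↑Pex ⊆ F) :
    triangle 7 ⊆ F := by
  have h_0_6 : ((0,6) : Pt) ∈ F := hPF (by simp [Pex])
  have h_1_5 : ((1,5) : Pt) ∈ F := hPF (by simp [Pex])
  have h_3_5 : ((3,5) : Pt) ∈ F := hPF (by simp [Pex])
  have h_3_6 : ((3,6) : Pt) ∈ F := hPF (by simp [Pex])
  have h_5_1 : ((5,1) : Pt) ∈ F := hPF (by simp [Pex])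
  have h_5_3 : ((5,3) : Pt) ∈ F := hPF (by simp [Pex])
  have h_6_0 : ((6,0) : Pt) ∈ F := hPF (by simp [Pex])
  have h_6_3 : ((6,3) : Pt) ∈ F := hPF (by simp [Pex])
  have h_1_6 : ((1,6) : Pt) ∈ F := by
    have := force2 hF ((0,5) : Pt) (by simpa using h_0_6) (by simpa using h_1_5)
    simpa using this
  have h_2_6 : ((2,6) : Pt) ∈ F := by
    have := force1 hF ((2,5) : Pt) (by simpa using h_3_6) (by simpa using h_3_5)
    simpa using this
  have h_6_1 : ((6,1) : Pt) ∈ F := by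
    have := force2 hF ((5,0) : Pt) (by simpa using h_5_1) (by simpa using h_6_0)
    simpa using this
  have h_6_2 : ((6,2) : Pt) ∈ F := by
    have := force3 hF ((5,2) : Pt) (by simpa using h_5_3) (by simpa using h_6_3)
    simpa using this
  have h_2_5 : ((2,5) : Pt) ∈ F := by
    have := force3 hF ((1,5) : Pt) (by simpa using h_1_6) (by simpa using h_2_6)
    simpa using this
  have h_3_4 : ((3,4) : Pt) ∈ F := by
    have := force3 hF ((2,4) : Pt) (by simpa using h_2_5) (by simpa using h_3_5)
    simpa using this
  have h_5_2 : ((5,2) : Pt) ∈ F := by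
    have := force1 hF ((5,1) : Pt) (by simpa using h_6_2) (by simpa using h_6_1)
    simpa using this
  have h_2_4 : ((2,4) : Pt) ∈ F := by
    have := force3 hF ((1,4) : Pt) (by simpa using h_1_5) (by simpa using h_2_5)
    simpa using this
  have h_3_3 : ((3,3) : Pt) ∈ F := by
    have := force3 hF ((2,3) : Pt) (by simpa using h_2_4) (by simpa using h_3_4)
    simpa using this
  have h_4_2 : ((4,2) : Pt) ∈ F := by
    have := force1 hF ((4,1) : Pt) (by simpa using h_5_2) (by simpa using h_5_1)
    simpa using this
  have h_4_3 : ((4,3) : Pt) ∈ F := by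
    have := force1 hF ((4,2) : Pt) (by simpa using h_5_3) (by simpa using h_5_2)
    simpa using this
  have h_4_4 : ((4,4) : Pt) ∈ F := by
    have := force2 hF ((3,3) : Pt) (by simpa using h_3_4) (by simpa using h_4_3)
    simpa using this
  have h_4_5 : ((4,5) : Pt) ∈ F := by
    have := force2 hF ((3,4) : Pt) (by simpa using h_3_5) (by simpa using h_4_4)
    simpa using this
  have h_4_6 : ((4,6) : Pt) ∈ F := by
    have := force2 hF ((3,5) : Pt) (by simpa using h_3_6) (by simpa using h_4_5)
    simpa using this
  have h_5_4 : ((5,4) : Pt) ∈ F := by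
    have := force2 hF ((4,3) : Pt) (by simpa using h_4_4) (by simpa using h_5_3)
    simpa using this
  have h_6_4 : ((6,4) : Pt) ∈ F := by
    have := force2 hF ((5,3) : Pt) (by simpa using h_5_4) (by simpa using h_6_3)
    simpa using this
  have h_5_5 : ((5,5) : Pt) ∈ F := by
    have := force2 hF ((4,4) : Pt) (by simpa using h_4_5) (by simpa using h_5_4)
    simpa using this
  have h_5_6 : ((5,6) : Pt) ∈ F := by
    have := force2 hF ((4,5) : Pt) (by simpa using h_4_6) (by simpa using h_5_5)
    simpa using this
  have h_6_5 : ((6,5) : Pt) ∈ F := by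
    have := force2 hF ((5,4) : Pt) (by simpa using h_5_5) (by simpa using h_6_4)
    simpa using this
  have h_6_6 : ((6,6) : Pt) ∈ F := by
    have := force2 hF ((5,5) : Pt) (by simpa using h_5_6) (by simpa using h_6_5)
    simpa using this
  intro p hp
  obtain ⟨a, b⟩ := p
  simp only [triangle, Set.mem_setOf_eq] at hp
  obtain ⟨h1, h2, h3, h4, h5⟩ := hp
  norm_num at h2 h4 h5
  interval_cases a <;> interval_cases b <;> first | assumption | omega

lemma Pex_subset_triangle : (↑Pex : Set Pt) ⊆ triangle 7 := by
  intro p hp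
  simp only [Pex, Finset.coe_insert, Set.mem_insert_iff, Finset.coe_singleton,
    Set.mem_singleton_iff] at hp
  rcases hp with rfl|rfl|rfl|rfl|rfl|rfl|rfl|rfl <;>
    · simp only [triangle, Set.mem_setOf_eq]
      norm_num

lemma fill_Pex : fill (↑Pex : Set Pt) = triangle 7 := by
  apply subset_antisymm (fill_subset Pex_subset_triangle (filled_triangle 7))
  intro p hp F hF
  exact triangle7_subset hF.2 hF.1 hp

lemma tri7mem (a b : ℤ) (h1 : 0 ≤ a) (h2 : a < 7) (h3 : 0 ≤ b) (h4 : b < 7)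
    (h5 : 6 ≤ a + b) : ((a, b) : Pt) ∈ triangle 7 := by
  simp only [triangle, Set.mem_setOf_eq]
  norm_num
  omega

lemma chain_step {r : ℕ} {k : Fin r → ℕ} {v : Fin r → Pt}
    (hnt : ∀ i j, i ≠ j →
      ¬ Touch (transl (v i) (triangle (k i))) (transl (v j) (triangle (k j))))
    (hcov : triangle 7 = ⋃ i, transl (v i) (triangle (k i)))
    {i0 : Fin r} {p q w : Pt}
    (hp : p ∈ transl (v i0) (triangle (k i0))) (hqS : q ∈ triangle 7)
    (hne : p ≠ q)
    (h1 : p ∈ transl w Tshape) (h2 : q ∈ transl w Tshape) :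
    q ∈ transl (v i0) (triangle (k i0)) := by
  have hq' : q ∈ ⋃ i, transl (v i) (triangle (k i)) := by rw [← hcov]; exact hqS
  obtain ⟨j, hj⟩ := Set.mem_iUnion.1 hq'
  rcases eq_or_ne j i0 with rfl | hji
  · exact hj
  · exfalso
    apply hnt i0 j (Ne.symm hji)
    refine Or.inl ⟨p, hp, ?_⟩
    exact Set.mem_biUnion hj (show p ∈ nbr q from ⟨hne, w, h2, h1⟩)

lemma conn_triangle7 {r : ℕ} {k : Fin r → ℕ} {v : Fin r → Pt}
    (hnt : ∀ i j, i ≠ j →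
      ¬ Touch (transl (v i) (triangle (k i))) (transl (v j) (triangle (k j))))
    (hcov : triangle 7 = ⋃ i, transl (v i) (triangle (k i)))
    {i0 : Fin r} (hi0 : ((0,6) : Pt) ∈ transl (v i0) (triangle (k i0))) :
    triangle 7 ⊆ transl (v i0) (triangle (k i0)) := by
  have c_0_6 := hi0
  have c_1_6 : ((1,6) : Pt) ∈ transl (v i0) (triangle (k i0)) :=
    chain_step hnt hcov c_0_6 (by norm_num [tri7mem]) (by decide)
      (by simpa using mem_transl1 ((0,5) : Pt))
      (by simpa using mem_transl2 ((0,5) : Pt))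
  have c_2_6 : ((2,6) : Pt) ∈ transl (v i0) (triangle (k i0)) :=
    chain_step hnt hcov c_1_6 (by norm_num [tri7mem]) (by decide)
      (by simpa using mem_transl1 ((1,5) : Pt))
      (by simpa using mem_transl2 ((1,5) : Pt))
  have c_3_6 : ((3,6) : Pt) ∈ transl (v i0) (triangle (k i0)) :=
    chain_step hnt hcov c_2_6 (by norm_num [tri7mem]) (by decide)
      (by simpa using mem_transl1 ((2,5) : Pt))
      (by simpa using mem_transl2 ((2,5) : Pt))
  have c_4_6 : ((4,6) : Pt) ∈ transl (v i0) (triangle (k i0)) :=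
    chain_step hnt hcov c_3_6 (by norm_num [tri7mem]) (by decide)
      (by simpa using mem_transl1 ((3,5) : Pt))
      (by simpa using mem_transl2 ((3,5) : Pt))
  have c_5_6 : ((5,6) : Pt) ∈ transl (v i0) (triangle (k i0)) :=
    chain_step hnt hcov c_4_6 (by norm_num [tri7mem]) (by decide)
      (by simpa using mem_transl1 ((4,5) : Pt))
      (by simpa using mem_transl2 ((4,5) : Pt))
  have c_6_6 : ((6,6) : Pt) ∈ transl (v i0) (triangle (k i0)) :=
    chain_step hnt hcov c_5_6 (by norm_num [tri7mem]) (by decide)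
      (by simpa using mem_transl1 ((5,5) : Pt))
      (by simpa using mem_transl2 ((5,5) : Pt))
  have c_1_5 : ((1,5) : Pt) ∈ transl (v i0) (triangle (k i0)) :=
    chain_step hnt hcov c_1_6 (by norm_num [tri7mem]) (by decide)
      (by simpa using mem_transl2 ((0,5) : Pt))
      (by simpa using mem_transl3 ((0,5) : Pt))
  have c_2_5 : ((2,5) : Pt) ∈ transl (v i0) (triangle (k i0)) :=
    chain_step hnt hcov c_1_5 (by norm_num [tri7mem]) (by decide)
      (by simpa using mem_transl1 ((1,4) : Pt))
      (by simpa using mem_transl2 ((1,4) : Pt))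
  have c_3_5 : ((3,5) : Pt) ∈ transl (v i0) (triangle (k i0)) :=
    chain_step hnt hcov c_2_5 (by norm_num [tri7mem]) (by decide)
      (by simpa using mem_transl1 ((2,4) : Pt))
      (by simpa using mem_transl2 ((2,4) : Pt))
  have c_4_5 : ((4,5) : Pt) ∈ transl (v i0) (triangle (k i0)) :=
    chain_step hnt hcov c_3_5 (by norm_num [tri7mem]) (by decide)
      (by simpa using mem_transl1 ((3,4) : Pt))
      (by simpa using mem_transl2 ((3,4) : Pt))
  have c_5_5 : ((5,5) : Pt) ∈ transl (v i0) (triangle (k i0)) :=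
    chain_step hnt hcov c_4_5 (by norm_num [tri7mem]) (by decide)
      (by simpa using mem_transl1 ((4,4) : Pt))
      (by simpa using mem_transl2 ((4,4) : Pt))
  have c_6_5 : ((6,5) : Pt) ∈ transl (v i0) (triangle (k i0)) :=
    chain_step hnt hcov c_5_5 (by norm_num [tri7mem]) (by decide)
      (by simpa using mem_transl1 ((5,4) : Pt))
      (by simpa using mem_transl2 ((5,4) : Pt))
  have c_2_4 : ((2,4) : Pt) ∈ transl (v i0) (triangle (k i0)) :=
    chain_step hnt hcov c_2_5 (by norm_num [tri7mem]) (by decide)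
      (by simpa using mem_transl2 ((1,4) : Pt))
      (by simpa using mem_transl3 ((1,4) : Pt))
  have c_3_4 : ((3,4) : Pt) ∈ transl (v i0) (triangle (k i0)) :=
    chain_step hnt hcov c_2_4 (by norm_num [tri7mem]) (by decide)
      (by simpa using mem_transl1 ((2,3) : Pt))
      (by simpa using mem_transl2 ((2,3) : Pt))
  have c_4_4 : ((4,4) : Pt) ∈ transl (v i0) (triangle (k i0)) :=
    chain_step hnt hcov c_3_4 (by norm_num [tri7mem]) (by decide)
      (by simpa using mem_transl1 ((3,3) : Pt))
      (by simpa using mem_transl2 ((3,3) : Pt))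
  have c_5_4 : ((5,4) : Pt) ∈ transl (v i0) (triangle (k i0)) :=
    chain_step hnt hcov c_4_4 (by norm_num [tri7mem]) (by decide)
      (by simpa using mem_transl1 ((4,3) : Pt))
      (by simpa using mem_transl2 ((4,3) : Pt))
  have c_6_4 : ((6,4) : Pt) ∈ transl (v i0) (triangle (k i0)) :=
    chain_step hnt hcov c_5_4 (by norm_num [tri7mem]) (by decide)
      (by simpa using mem_transl1 ((5,3) : Pt))
      (by simpa using mem_transl2 ((5,3) : Pt))
  have c_3_3 : ((3,3) : Pt) ∈ transl (v i0) (triangle (k i0)) :=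
    chain_step hnt hcov c_3_4 (by norm_num [tri7mem]) (by decide)
      (by simpa using mem_transl2 ((2,3) : Pt))
      (by simpa using mem_transl3 ((2,3) : Pt))
  have c_4_3 : ((4,3) : Pt) ∈ transl (v i0) (triangle (k i0)) :=
    chain_step hnt hcov c_3_3 (by norm_num [tri7mem]) (by decide)
      (by simpa using mem_transl1 ((3,2) : Pt))
      (by simpa using mem_transl2 ((3,2) : Pt))
  have c_5_3 : ((5,3) : Pt) ∈ transl (v i0) (triangle (k i0)) :=
    chain_step hnt hcov c_4_3 (by norm_num [tri7mem]) (by decide)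
      (by simpa using mem_transl1 ((4,2) : Pt))
      (by simpa using mem_transl2 ((4,2) : Pt))
  have c_6_3 : ((6,3) : Pt) ∈ transl (v i0) (triangle (k i0)) :=
    chain_step hnt hcov c_5_3 (by norm_num [tri7mem]) (by decide)
      (by simpa using mem_transl1 ((5,2) : Pt))
      (by simpa using mem_transl2 ((5,2) : Pt))
  have c_4_2 : ((4,2) : Pt) ∈ transl (v i0) (triangle (k i0)) :=
    chain_step hnt hcov c_4_3 (by norm_num [tri7mem]) (by decide)
      (by simpa using mem_transl2 ((3,2) : Pt))
      (by simpa using mem_transl3 ((3,2) : Pt))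
  have c_5_2 : ((5,2) : Pt) ∈ transl (v i0) (triangle (k i0)) :=
    chain_step hnt hcov c_4_2 (by norm_num [tri7mem]) (by decide)
      (by simpa using mem_transl1 ((4,1) : Pt))
      (by simpa using mem_transl2 ((4,1) : Pt))
  have c_6_2 : ((6,2) : Pt) ∈ transl (v i0) (triangle (k i0)) :=
    chain_step hnt hcov c_5_2 (by norm_num [tri7mem]) (by decide)
      (by simpa using mem_transl1 ((5,1) : Pt))
      (by simpa using mem_transl2 ((5,1) : Pt))
  have c_5_1 : ((5,1) : Pt) ∈ transl (v i0) (triangle (k i0)) :=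
    chain_step hnt hcov c_5_2 (by norm_num [tri7mem]) (by decide)
      (by simpa using mem_transl2 ((4,1) : Pt))
      (by simpa using mem_transl3 ((4,1) : Pt))
  have c_6_1 : ((6,1) : Pt) ∈ transl (v i0) (triangle (k i0)) :=
    chain_step hnt hcov c_5_1 (by norm_num [tri7mem]) (by decide)
      (by simpa using mem_transl1 ((5,0) : Pt))
      (by simpa using mem_transl2 ((5,0) : Pt))
  have c_6_0 : ((6,0) : Pt) ∈ transl (v i0) (triangle (k i0)) :=
    chain_step hnt hcov c_6_1 (by norm_num [tri7mem]) (by decide)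
      (by simpa using mem_transl2 ((5,0) : Pt))
      (by simpa using mem_transl3 ((5,0) : Pt))
  intro p hp
  obtain ⟨a, b⟩ := p
  simp only [triangle, Set.mem_setOf_eq] at hp
  obtain ⟨h1, h2, h3, h4, h5⟩ := hp
  norm_num at h2 h4 h5
  interval_cases a <;> interval_cases b <;> first | assumption | omega

lemma trimem (m : ℕ) (a b : ℤ) (h1 : 0 ≤ a) (h2 : a < (m : ℤ)) (h3 : 0 ≤ b)
    (h4 : b < (m : ℤ)) (h5 : (m : ℤ) - 1 ≤ a + b) : ((a, b) : Pt) ∈ triangle m :=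
  ⟨h1, h2, h3, h4, h5⟩

lemma mk_add_mk (x y u t : ℤ) : ((x, y) : Pt) + (u, t) = (x + u, y + t) := rfl

lemma tri_neighbor (p : Pt) (hp : p ∈ triangle 7) :
    ∃ q w : Pt, q ∈ triangle 7 ∧ q ≠ p ∧ p ∈ transl w Tshape ∧
      q ∈ transl w Tshape := by
  obtain ⟨a, b⟩ := p
  simp only [triangle, Set.mem_setOf_eq] at hp
  obtain ⟨h1, h2, h3, h4, h5⟩ := hp
  norm_num at h2 h4 h5
  rcases lt_or_ge b 6 with hb | hb
  · refine ⟨(a, b+1), (a-1, b), trimem _ _ _ (by omega) (by omega) (by omega) (by omega) (by omega), ?_, ?_, ?_⟩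
    · simp only [ne_eq, Prod.mk.injEq]; intro h; omega
    · have h := mem_transl3 ((a-1, b) : Pt)
      rw [mk_add_mk] at h; norm_num at h; exact h
    · have h := mem_transl2 ((a-1, b) : Pt)
      rw [mk_add_mk] at h; norm_num at h; exact h
  · have hb6 : b = 6 := by omega
    subst hb6
    rcases lt_or_ge a 6 with ha | ha
    · refine ⟨(a+1, 6), (a, 5), trimem _ _ _ (by omega) (by omega) (by omega) (by omega) (by omega), ?_, ?_, ?_⟩
      · simp only [ne_eq, Prod.mk.injEq]; intro h; omega
      · have h := mem_transl1 ((a, 5) : Pt)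
        rw [mk_add_mk] at h; norm_num at h; exact h
      · have h := mem_transl2 ((a, 5) : Pt)
        rw [mk_add_mk] at h; norm_num at h; exact h
    · have ha6 : a = 6 := by omega
      subst ha6
      refine ⟨(6, 5), (5, 5), by norm_num [tri7mem], by decide, ?_, ?_⟩
      · have h := mem_transl2 ((5, 5) : Pt)
        rw [mk_add_mk] at h; norm_num at h; exact h
      · have h := mem_transl3 ((5, 5) : Pt)
        rw [mk_add_mk] at h; norm_num at h; exact h

/-- there is a pattern with excess `1` whose only excess set is
the empty set. -/
theorem exists_excess_one_no_excess_set :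
    ∃ P : Finset Pt,
      (∀ (r : ℕ) (k : Fin r → ℕ) (v : Fin r → Pt), IsDecomp P r k v →
        (P.card : ℤ) - ∑ i, (k i : ℤ) = 1) ∧
      (∀ U ⊆ P, fill ((P \ U : Finset Pt) : Set Pt) = fill (P : Set Pt) → U = ∅) := by
  refine ⟨Pex, ?_, ?_⟩
  · -- every decomposition has total size 7
    rintro r k v ⟨hcov, hk1, hnt⟩
    rw [fill_Pex] at hcov
    -- the piece containing (0,6)
    have h06 : ((0,6) : Pt) ∈ ⋃ i, transl (v i) (triangle (k i)) := by
      rw [← hcov]; norm_num [tri7mem]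
    obtain ⟨i0, hi0⟩ := Set.mem_iUnion.1 h06
    have cover : triangle 7 ⊆ transl (v i0) (triangle (k i0)) :=
      conn_triangle7 hnt hcov hi0
    have hAeq : transl (v i0) (triangle (k i0)) = triangle 7 := by
      apply subset_antisymm _ cover
      rw [hcov]
      exact Set.subset_iUnion (fun i => transl (v i) (triangle (k i))) i0
    -- all indices are equal to i0
    have all_eq : ∀ j : Fin r, j = i0 := by
      intro j
      by_contra hji
      have hmj : 1 ≤ (k j : ℤ) := by exact_mod_cast hk1 j
      have hx : v j + ((0 : ℤ), (k j : ℤ) - 1) ∈ transl (v j) (triangle (k j)) :=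
        ⟨((0 : ℤ), (k j : ℤ) - 1),
          trimem _ _ _ (by omega) (by omega) (by omega) (by omega) (by omega), rfl⟩
      have hx7 : v j + ((0 : ℤ), (k j : ℤ) - 1) ∈ triangle 7 := by
        rw [hcov]
        exact Set.mem_iUnion.2 ⟨j, hx⟩
      obtain ⟨y, w, hy7, hyx, hxw, hyw⟩ := tri_neighbor _ hx7
      apply hnt i0 j (fun h => hji h.symm)
      refine Or.inl ⟨y, cover hy7, ?_⟩
      exact Set.mem_biUnion hx (show y ∈ nbr _ from ⟨hyx, w, hxw, hyw⟩)
    -- the unique piece is exactly triangle 7, so k i0 = 7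
    have hm : 1 ≤ (k i0 : ℤ) := by exact_mod_cast hk1 i0
    have htri1 : ((0 : ℤ), (k i0 : ℤ) - 1) ∈ triangle (k i0) :=
      trimem _ _ _ (by omega) (by omega) (by omega) (by omega) (by omega)
    have htri2 : (((k i0 : ℤ) - 1), (0 : ℤ)) ∈ triangle (k i0) :=
      trimem _ _ _ (by omega) (by omega) (by omega) (by omega) (by omega)
    have hD1 : v i0 + ((0 : ℤ), (k i0 : ℤ) - 1) ∈ triangle 7 := by
      rw [← hAeq]; exact ⟨_, htri1, rfl⟩
    have hD2 : v i0 + (((k i0 : ℤ) - 1), (0 : ℤ)) ∈ triangle 7 := by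
      rw [← hAeq]; exact ⟨_, htri2, rfl⟩
    have hA : -v i0 + ((0 : ℤ), (6 : ℤ)) ∈ triangle (k i0) := by
      have h : ((0,6) : Pt) ∈ transl (v i0) (triangle (k i0)) := by
        rw [hAeq]; norm_num [tri7mem]
      simpa [transl, and_comm] using h
    have hB : -v i0 + ((6 : ℤ), (0 : ℤ)) ∈ triangle (k i0) := by
      have h : ((6,0) : Pt) ∈ transl (v i0) (triangle (k i0)) := by
        rw [hAeq]; norm_num [tri7mem]
      simpa [transl, and_comm] using h
    have hC : -v i0 + ((6 : ℤ), (6 : ℤ)) ∈ triangle (k i0) := by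
      have h : ((6,6) : Pt) ∈ transl (v i0) (triangle (k i0)) := by
        rw [hAeq]; norm_num [tri7mem]
      simpa [transl, and_comm] using h
    have hk7 : (k i0 : ℤ) = 7 := by
      simp only [triangle, Set.mem_setOf_eq, Prod.fst_add, Prod.snd_add,
        Prod.fst_neg, Prod.snd_neg] at hA hB hC hD1 hD2
      push_cast at hA hB hC hD1 hD2
      omega
    have hsum : ∑ i, (k i : ℤ) = (k i0 : ℤ) :=
      Finset.sum_eq_single_of_mem i0 (Finset.mem_univ i0)
        (fun b _ hb => absurd (all_eq b) hb)
    have hcard : Pex.card = 8 := by decide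
    rw [hsum, hk7, hcard]
    norm_num
  · -- no nonempty excess set
    intro U hU hfill
    rcases Finset.eq_empty_or_nonempty U with rfl | ⟨q, hq⟩
    · rfl
    exfalso
    have hqP : q ∈ Pex := hU hq
    have h66 : ((6,6) : Pt) ∈ fill ((Pex \ U : Finset Pt) : Set Pt) := by
      rw [hfill, fill_Pex]; norm_num [tri7mem]
    simp only [Pex, Finset.mem_insert, Finset.mem_singleton] at hqP

    rcases hqP with rfl|rfl|rfl|rfl|rfl|rfl|rfl|rfl
    · have hsub : ((Pex \ U : Finset Pt) : Set Pt) ⊆ (↑Fq0 : Set Pt) := by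
        intro p hp
        have hp' : p ∈ Pex ∧ p ∉ U := by simpa [Finset.mem_sdiff] using hp
        have key : ∀ x ∈ Pex, x ≠ (((0:ℤ), (6:ℤ)) : Pt) → x ∈ Fq0 := by decide
        exact key p hp'.1 (fun h => hp'.2 (by rw [h]; exact hq))
      exact absurd ((by simpa using fill_subset hsub filledFq0 h66) :
        ((6,6) : Pt) ∈ Fq0) (by decide)
    · have hsub : ((Pex \ U : Finset Pt) : Set Pt) ⊆ (↑Fq1 : Set Pt) := by
        intro p hp
        have hp' : p ∈ Pex ∧ p ∉ U := by simpa [Finset.mem_sdiff] using hp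
        have key : ∀ x ∈ Pex, x ≠ (((1:ℤ), (5:ℤ)) : Pt) → x ∈ Fq1 := by decide
        exact key p hp'.1 (fun h => hp'.2 (by rw [h]; exact hq))
      exact absurd ((by simpa using fill_subset hsub filledFq1 h66) :
        ((6,6) : Pt) ∈ Fq1) (by decide)
    · have hsub : ((Pex \ U : Finset Pt) : Set Pt) ⊆ (↑Fq2 : Set Pt) := by
        intro p hp
        have hp' : p ∈ Pex ∧ p ∉ U := by simpa [Finset.mem_sdiff] using hp
        have key : ∀ x ∈ Pex, x ≠ (((3:ℤ), (5:ℤ)) : Pt) → x ∈ Fq2 := by decide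
        exact key p hp'.1 (fun h => hp'.2 (by rw [h]; exact hq))
      exact absurd ((by simpa using fill_subset hsub filledFq2 h66) :
        ((6,6) : Pt) ∈ Fq2) (by decide)
    · have hsub : ((Pex \ U : Finset Pt) : Set Pt) ⊆ (↑Fq3 : Set Pt) := by
        intro p hp
        have hp' : p ∈ Pex ∧ p ∉ U := by simpa [Finset.mem_sdiff] using hp
        have key : ∀ x ∈ Pex, x ≠ (((3:ℤ), (6:ℤ)) : Pt) → x ∈ Fq3 := by decide
        exact key p hp'.1 (fun h => hp'.2 (by rw [h]; exact hq))
      exact absurd ((by simpa using fill_subset hsub filledFq3 h66) :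
        ((6,6) : Pt) ∈ Fq3) (by decide)
    · have hsub : ((Pex \ U : Finset Pt) : Set Pt) ⊆ (↑Fq4 : Set Pt) := by
        intro p hp
        have hp' : p ∈ Pex ∧ p ∉ U := by simpa [Finset.mem_sdiff] using hp
        have key : ∀ x ∈ Pex, x ≠ (((5:ℤ), (1:ℤ)) : Pt) → x ∈ Fq4 := by decide
        exact key p hp'.1 (fun h => hp'.2 (by rw [h]; exact hq))
      exact absurd ((by simpa using fill_subset hsub filledFq4 h66) :
        ((6,6) : Pt) ∈ Fq4) (by decide)
    · have hsub : ((Pex \ U : Finset Pt) : Set Pt) ⊆ (↑Fq5 : Set Pt) := by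
        intro p hp
        have hp' : p ∈ Pex ∧ p ∉ U := by simpa [Finset.mem_sdiff] using hp
        have key : ∀ x ∈ Pex, x ≠ (((5:ℤ), (3:ℤ)) : Pt) → x ∈ Fq5 := by decide
        exact key p hp'.1 (fun h => hp'.2 (by rw [h]; exact hq))
      exact absurd ((by simpa using fill_subset hsub filledFq5 h66) :
        ((6,6) : Pt) ∈ Fq5) (by decide)
    · have hsub : ((Pex \ U : Finset Pt) : Set Pt) ⊆ (↑Fq6 : Set Pt) := by
        intro p hp
        have hp' : p ∈ Pex ∧ p ∉ U := by simpa [Finset.mem_sdiff] using hp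
        have key : ∀ x ∈ Pex, x ≠ (((6:ℤ), (0:ℤ)) : Pt) → x ∈ Fq6 := by decide
        exact key p hp'.1 (fun h => hp'.2 (by rw [h]; exact hq))
      exact absurd ((by simpa using fill_subset hsub filledFq6 h66) :
        ((6,6) : Pt) ∈ Fq6) (by decide)
    · have hsub : ((Pex \ U : Finset Pt) : Set Pt) ⊆ (↑Fq7 : Set Pt) := by
        intro p hp
        have hp' : p ∈ Pex ∧ p ∉ U := by simpa [Finset.mem_sdiff] using hp
        have key : ∀ x ∈ Pex, x ≠ (((6:ℤ), (3:ℤ)) : Pt) → x ∈ Fq7 := by decide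
        exact key p hp'.1 (fun h => hp'.2 (by rw [h]; exact hq))
      exact absurd ((by simpa using fill_subset hsub filledFq7 h66) :
        ((6,6) : Pt) ∈ Fq7) (by decide)
end

section
/- If P is in the solitaire orbit of the line L_n, then for every k with 1 ≤ k ≤ n, the number of points of P in the first k columns {0,…,k−1} × ℤ is at most k. -/
open Set Relation

/-!
For every `k : ℕ`, at most `k` points lie left of column `k` (so none lies left of column `0`);
these bounds hold for `L_n` and are invariant under moves. A move can raise the count of the
first `k` columns only by moving a point from column `k` to column `k - 1`, the two columns of
`v + T`. The third point of that translate then also lies in column `k`, so the first `k + 1`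
columns held at least two points more than the first `k`, which therefore held at most `k - 1`.
-/

open Finset

theorem Finset.card_filter_insert_erase_le {α : Type*} [DecidableEq α] (p : α → Prop)
    [DecidablePred p] (s : Finset α) (a b : α) :
    #{x ∈ insert b (s.erase a) | p x} ≤ #{x ∈ s | p x} + 1 := by
  rw [filter_insert, filter_erase]
  split_ifs
  · exact (card_insert_le _ _).trans (Nat.add_le_add_right card_erase_le 1)
  · exact card_erase_le.trans (Nat.le_succ _)

theorem Finset.card_filter_insert_erase_le_of_imp {α : Type*} [DecidableEq α] (p : α → Prop)
    [DecidablePred p] {s : Finset α} {a b : α} (ha : a ∈ s) (hab : p b → p a) :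
    #{x ∈ insert b (s.erase a) | p x} ≤ #{x ∈ s | p x} := by
  rw [filter_insert, filter_erase]
  split_ifs with hb
  · exact (card_insert_le _ _).trans (card_erase_add_one (mem_filter.2 ⟨ha, hab hb⟩)).le
  · exact card_erase_le

theorem Tshape_fst_of_fst_lt {x y t : Pt} (hx : x ∈ Tshape) (hy : y ∈ Tshape)
    (ht : t ∈ Tshape) (htx : t ≠ x) (hty : t ≠ y) (hyx : y.1 < x.1) :
    y.1 + 1 = x.1 ∧ t.1 = x.1 := by
  simp only [Tshape, Set.mem_insert_iff, Set.mem_singleton_iff] at hx hy ht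
  rcases hx with rfl | rfl | rfl <;> rcases hy with rfl | rfl | rfl <;>
    rcases ht with rfl | rfl | rfl <;> simp_all

theorem Move.exists_third_mem {P Q : Finset Pt} (h : Move P Q) :
    ∃ v x y t : Pt, x ∈ Tshape ∧ y ∈ Tshape ∧ t ∈ Tshape ∧ t ≠ x ∧ t ≠ y ∧
      v + x ∈ P ∧ v + y ∉ P ∧ v + t ∈ P ∧ Q = insert (v + y) (P.erase (v + x)) := by
  obtain ⟨v, x, y, hx, hy, -, hPx, hPy, hcard, hQ⟩ := h
  obtain ⟨_, ⟨hPu, t, ht, rfl⟩, hux⟩ :=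
    Set.exists_ne_of_one_lt_ncard (hcard ▸ one_lt_two) (v + x)
  refine ⟨v, x, y, t, hx, hy, ht, ?_, ?_, hPx, hPy, hPu, ?_⟩
  · rintro rfl
    exact hux rfl
  · rintro rfl
    exact hPy hPu
  · exact coe_injective (by rw [hQ, coe_insert, coe_erase])

def ColumnBounded (P : Finset Pt) : Prop := ∀ k : ℕ, #{p ∈ P | p.1 < (k : ℤ)} ≤ k

theorem ColumnBounded.card_filter_add_two_le {P : Finset Pt} (hP : ColumnBounded P)
    {a c : Pt} (ha : a ∈ P) (hc : c ∈ P) (hac : a ≠ c) {k : ℕ} (hak : a.1 = k)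
    (hck : c.1 = k) : #{p ∈ P | p.1 < (k : ℤ)} + 2 ≤ k + 1 := by
  have hcard :
      #(insert a (insert c {p ∈ P | p.1 < (k : ℤ)})) = #{p ∈ P | p.1 < (k : ℤ)} + 2 := by
    rw [card_insert_of_notMem, card_insert_of_notMem]
    · simp [hck]
    · simp [hac, hak]
  have hsub :
      insert a (insert c {p ∈ P | p.1 < (k : ℤ)}) ⊆ {p ∈ P | p.1 < ((k + 1 : ℕ) : ℤ)} := by
    intro p hp
    simp only [Finset.mem_insert, mem_filter] at hp ⊢
    push_cast
    rcases hp with rfl | rfl | ⟨hp, hpk⟩ <;> refine ⟨by assumption, by omega⟩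
  exact hcard ▸ (Finset.card_le_card hsub).trans (hP (k + 1))

theorem ColumnBounded.of_move {P Q : Finset Pt} (hP : ColumnBounded P) (h : Move P Q) :
    ColumnBounded Q := by
  obtain ⟨v, x, y, t, hx, hy, ht, htx, hty, ha, hb, hc, rfl⟩ := h.exists_third_mem
  intro k
  by_cases hleft : (v + y).1 < k ∧ (k : ℤ) ≤ (v + x).1
  · simp only [Prod.fst_add] at hleft
    obtain ⟨hyx, htx'⟩ := Tshape_fst_of_fst_lt hx hy ht htx hty (by omega)
    have htwo := hP.card_filter_add_two_le ha hc (fun h => htx (add_left_cancel h).symm)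
      (k := k) (by rw [Prod.fst_add]; omega) (by rw [Prod.fst_add]; omega)
    have := card_filter_insert_erase_le (fun p : Pt => p.1 < (k : ℤ)) P (v + x) (v + y)
    omega
  · exact (card_filter_insert_erase_le_of_imp _ ha (by omega)).trans (hP k)

theorem columnBounded_lineF (n : ℕ) : ColumnBounded (lineF n) := by
  intro k
  have hsub : {p ∈ lineF n | p.1 < (k : ℤ)} ⊆
      (range k).image fun a : ℕ => ((a : ℤ), (n : ℤ) - 1) := by
    intro p hp
    simp only [lineF, mem_filter, Finset.mem_image, Finset.mem_range] at hp ⊢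
    obtain ⟨⟨a, -, rfl⟩, hak⟩ := hp
    exact ⟨a, by omega, rfl⟩
  exact (Finset.card_le_card hsub).trans (card_image_le.trans (card_range k).le)

theorem line_orbit_column_bound_general (n : ℕ) (P : Finset Pt)
    (h : InOrbit (lineF n) P) (k : ℕ) :
    (P.filter (fun p => 0 ≤ p.1 ∧ p.1 < (k : ℤ))).card ≤ k := by
  have hP : ColumnBounded P := by
    induction h with
    | refl => exact columnBounded_lineF n
    | tail _ hmove ih => exact ih.of_move hmove
  exact (Finset.card_le_card (monotone_filter_right P fun _ _ hp => hp.2)).trans (hP k)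

/-- a pattern in the orbit of `L_n` has at most `k` points in the
first `k` columns, for every `1 ≤ k ≤ n`. -/
theorem line_orbit_column_bound (n : ℕ) (P : Finset Pt)
    (h : InOrbit (lineF n) P) (k : ℕ) (hk1 : 1 ≤ k) (hkn : k ≤ n) :
    (P.filter (fun p => 0 ≤ p.1 ∧ p.1 < (k : ℤ))).card ≤ k :=
  line_orbit_column_bound_general n P h k
end
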